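/- For Chavarriga's system ẋ = 5x + 6x² + 4(1+a)xy + ay², ẏ = x + 2y + 4xy + (2+3a)y², the quartic f(x,y) = x² + x³ + x²y + 2axy² + 2axy³ + a²y⁴ is an invariant algebraic curve; that is, there exists a polynomial k(x,y) such that P·f_x + Q·f_y = k·f identically. -/

import Mathlib

/-!
Invariance of `f = 0` is the polynomial identity `P f_x + Q f_y = k f` in `ℝ[x, y]` with the
cofactor `k = 10 + 18x + (10 + 12a)y` (read off from the lowest- and highest-degree terms). It
passes to the functions because the Fréchet derivative of a polynomial function along a
coordinate vector is the evaluation of its formal partial derivative.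
-/

open MvPolynomial

theorem pderiv_ofNat {σ R : Type*} [CommSemiring R] (i : σ) (n : ℕ) [n.AtLeastTwo] :
    pderiv i (ofNat(n) : MvPolynomial σ R) = 0 :=
  (pderiv i).map_natCast n

section

variable {𝕜 : Type*} [NontriviallyNormedField 𝕜]

theorem hasFDerivAt_eval_fin_two (g : MvPolynomial (Fin 2) 𝕜) (q : 𝕜 × 𝕜) :
    HasFDerivAt (fun q : 𝕜 × 𝕜 => eval ![q.1, q.2] g)
      ((ContinuousLinearMap.fst 𝕜 𝕜 𝕜).smulRight (eval ![q.1, q.2] (pderiv 0 g))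
        + (ContinuousLinearMap.snd 𝕜 𝕜 𝕜).smulRight (eval ![q.1, q.2] (pderiv 1 g))) q := by
  induction g using MvPolynomial.induction_on with
  | C c =>
    simp only [eval_C]
    refine (hasFDerivAt_const (𝕜 := 𝕜) c q).congr_fderiv ?_
    ext <;> simp
  | add g h hg hh =>
    simp only [map_add]
    refine (hg.add hh).congr_fderiv ?_
    ext <;> simp
  | mul_X g i hg =>
    have hX : HasFDerivAt (fun q : 𝕜 × 𝕜 => eval ![q.1, q.2] (X i))
        ((ContinuousLinearMap.fst 𝕜 𝕜 𝕜).smulRight (eval ![q.1, q.2] (pderiv 0 (X i)))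
          + (ContinuousLinearMap.snd 𝕜 𝕜 𝕜).smulRight (eval ![q.1, q.2] (pderiv 1 (X i)))) q := by
      fin_cases i
      · simp only [eval_X]
        refine (hasFDerivAt_fst (𝕜 := 𝕜) (p := q)).congr_fderiv ?_
        ext <;> simp [pderiv_X]
      · simp only [eval_X]
        refine (hasFDerivAt_snd (𝕜 := 𝕜) (p := q)).congr_fderiv ?_
        ext <;> simp [pderiv_X]
    simp only [map_mul]
    refine (hg.mul hX).congr_fderiv ?_
    ext <;> simp

theorem fderiv_eval_fin_two_fst (g : MvPolynomial (Fin 2) 𝕜) (q : 𝕜 × 𝕜) :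
    fderiv 𝕜 (fun q : 𝕜 × 𝕜 => eval ![q.1, q.2] g) q (1, 0) = eval ![q.1, q.2] (pderiv 0 g) := by
  simp [(hasFDerivAt_eval_fin_two g q).fderiv]

theorem fderiv_eval_fin_two_snd (g : MvPolynomial (Fin 2) 𝕜) (q : 𝕜 × 𝕜) :
    fderiv 𝕜 (fun q : 𝕜 × 𝕜 => eval ![q.1, q.2] g) q (0, 1) = eval ![q.1, q.2] (pderiv 1 g) := by
  simp [(hasFDerivAt_eval_fin_two g q).fderiv]

theorem eval_mul_fderiv_add_eval_mul_fderiv {P Q F K : MvPolynomial (Fin 2) 𝕜}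
    (h : P * pderiv 0 F + Q * pderiv 1 F = K * F) (q : 𝕜 × 𝕜) :
    eval ![q.1, q.2] P * fderiv 𝕜 (fun q : 𝕜 × 𝕜 => eval ![q.1, q.2] F) q (1, 0)
      + eval ![q.1, q.2] Q * fderiv 𝕜 (fun q : 𝕜 × 𝕜 => eval ![q.1, q.2] F) q (0, 1)
      = eval ![q.1, q.2] K * eval ![q.1, q.2] F := by
  rw [fderiv_eval_fin_two_fst, fderiv_eval_fin_two_snd, ← map_mul, ← map_mul, ← map_add, h,
    map_mul]

end

namespace Chavarriga

variable (a : ℝ)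

noncomputable def P : MvPolynomial (Fin 2) ℝ :=
  5 * X 0 + 6 * X 0 ^ 2 + 4 * (1 + C a) * X 0 * X 1 + C a * X 1 ^ 2

noncomputable def Q : MvPolynomial (Fin 2) ℝ :=
  X 0 + 2 * X 1 + 4 * X 0 * X 1 + (2 + 3 * C a) * X 1 ^ 2

noncomputable def curve : MvPolynomial (Fin 2) ℝ :=
  X 0 ^ 2 + X 0 ^ 3 + X 0 ^ 2 * X 1 + 2 * C a * X 0 * X 1 ^ 2 + 2 * C a * X 0 * X 1 ^ 3
    + C a ^ 2 * X 1 ^ 4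

noncomputable def cofactor : MvPolynomial (Fin 2) ℝ :=
  10 + 18 * X 0 + (10 + 12 * C a) * X 1

theorem curve_invariant :
    P a * pderiv 0 (curve a) + Q a * pderiv 1 (curve a) = cofactor a * curve a := by
  simp only [P, Q, curve, cofactor, map_add, Derivation.leibniz, Derivation.leibniz_pow,
    pderiv_X, derivation_C, pderiv_ofNat, Pi.single_eq_same, Pi.single_eq_of_ne, ne_eq,
    one_ne_zero, zero_ne_one, not_false_eq_true, Nat.add_one_sub_one, Nat.cast_ofNat, pow_one,
    smul_eq_mul, nsmul_eq_mul, mul_one, mul_zero, zero_add, add_zero]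
  ring

end Chavarriga

theorem stmt_12_general (a : ℝ)
    (P Q f : ℝ × ℝ → ℝ)
    (hP : ∀ p : ℝ × ℝ, P p = 5 * p.1 + 6 * p.1 ^ 2 + 4 * (1 + a) * p.1 * p.2
      + a * p.2 ^ 2)
    (hQ : ∀ p : ℝ × ℝ, Q p = p.1 + 2 * p.2 + 4 * p.1 * p.2
      + (2 + 3 * a) * p.2 ^ 2)
    (hf : ∀ p : ℝ × ℝ, f p = p.1 ^ 2 + p.1 ^ 3 + p.1 ^ 2 * p.2
      + 2 * a * p.1 * p.2 ^ 2 + 2 * a * p.1 * p.2 ^ 3 + a ^ 2 * p.2 ^ 4) :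
    ∃ k : MvPolynomial (Fin 2) ℝ,
      ∀ p : ℝ × ℝ, P p * fderiv ℝ f p (1, 0) + Q p * fderiv ℝ f p (0, 1)
        = MvPolynomial.eval ![p.1, p.2] k * f p := by
  obtain rfl : P = fun p => eval ![p.1, p.2] (Chavarriga.P a) := by
    funext p; simp [hP, Chavarriga.P]
  obtain rfl : Q = fun p => eval ![p.1, p.2] (Chavarriga.Q a) := by
    funext p; simp [hQ, Chavarriga.Q]
  obtain rfl : f = fun p => eval ![p.1, p.2] (Chavarriga.curve a) := by
    funext p; simp [hf, Chavarriga.curve]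
  exact ⟨Chavarriga.cofactor a,
    eval_mul_fderiv_add_eval_mul_fderiv (Chavarriga.curve_invariant a)⟩

/-- For Chavarriga's system `ẋ = 5x + 6x² + 4(1+a)xy + ay²`,
`ẏ = x + 2y + 4xy + (2+3a)y²` with `(−71 + 17√17)/32 < a < 0`, the quartic
`f(x,y) = x² + x³ + x²y + 2axy² + 2axy³ + a²y⁴` defines an invariant algebraic curve:
there exists a polynomial `k` with `P·f_x + Q·f_y = k·f` identically. -/
theorem stmt_12 (a : ℝ)
    (ha1 : (-71 + 17 * Real.sqrt 17) / 32 < a) (ha2 : a < 0)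
    (P Q f : ℝ × ℝ → ℝ)
    (hP : ∀ p : ℝ × ℝ, P p = 5 * p.1 + 6 * p.1 ^ 2 + 4 * (1 + a) * p.1 * p.2
      + a * p.2 ^ 2)
    (hQ : ∀ p : ℝ × ℝ, Q p = p.1 + 2 * p.2 + 4 * p.1 * p.2
      + (2 + 3 * a) * p.2 ^ 2)
    (hf : ∀ p : ℝ × ℝ, f p = p.1 ^ 2 + p.1 ^ 3 + p.1 ^ 2 * p.2
      + 2 * a * p.1 * p.2 ^ 2 + 2 * a * p.1 * p.2 ^ 3 + a ^ 2 * p.2 ^ 4) :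
    ∃ k : MvPolynomial (Fin 2) ℝ,
      ∀ p : ℝ × ℝ, P p * fderiv ℝ f p (1, 0) + Q p * fderiv ℝ f p (0, 1)
        = MvPolynomial.eval ![p.1, p.2] k * f p :=
  stmt_12_general a P Q f hP hQ hf
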